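/- arXiv:2009.11205 — 3 statements merged into one kernel-verified Lean document; each statement's English description precedes it below -/
import Mathlib

section
/- Negative feedback interconnection of a strictly passive static map with stable first-order lags is stable: if X ∈ ℝ^{n×n} is symmetric positive definite and T, K are diagonal matrices with T_kk > 0 and K_kk ≥ 0 for all k, then the matrix A = -T^{-1}(I + K X) is Hurwitz, i.e., every eigenvalue of A has strictly negative real part. -/
/-!
Let `A v = μ v` with `v ≠ 0`. Multiplying by `T` gives `μ T_k v_k = -(v_k + K_k (X v)_k)` for
every `k`. Suppose `Re μ ≥ 0`. Where `K_k = 0` this forces `v_k = 0`, since `Re (1 + μ T_k) ≥ 1`.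
Pairing the equation with `K_k⁻¹ v̄_k` and summing gives
`Σ |v_k|² / K_k + v* X v + μ Σ T_k |v_k|² / K_k = 0`, whose real part is positive: contradiction.
-/

open Matrix ComplexOrder

namespace Matrix

variable {n : Type*} [Fintype n]

lemma re_star_dotProduct_map_ofReal_mulVec (X : Matrix n n ℝ) (v : n → ℂ) :
    (star v ⬝ᵥ X.map ((↑) : ℝ → ℂ) *ᵥ v).re
      = (fun k ↦ (v k).re) ⬝ᵥ X *ᵥ (fun k ↦ (v k).re)
        + (fun k ↦ (v k).im) ⬝ᵥ X *ᵥ (fun k ↦ (v k).im) := by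
  simp only [dotProduct, mulVec, Finset.mul_sum, Complex.re_sum, ← Finset.sum_add_distrib]
  refine Finset.sum_congr rfl fun i _ ↦ Finset.sum_congr rfl fun j _ ↦ ?_
  simp [Complex.mul_re, Complex.mul_im]

lemma PosDef.map_ofReal {X : Matrix n n ℝ} (hX : X.PosDef) :
    (X.map ((↑) : ℝ → ℂ)).PosDef := by
  have hXc : (X.map ((↑) : ℝ → ℂ)).IsHermitian :=
    hX.isHermitian.map _ fun _ ↦ (Complex.conj_ofReal _).symm
  refine .of_dotProduct_mulVec_pos hXc fun v hv ↦
    RCLike.pos_iff.2 ⟨?_, hXc.im_star_dotProduct_mulVec_self v⟩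
  have hre : ∀ w : n → ℝ, 0 ≤ w ⬝ᵥ X *ᵥ w := by
    simpa using hX.posSemidef.dotProduct_mulVec_nonneg
  have hpos : ∀ w : n → ℝ, w ≠ 0 → 0 < w ⬝ᵥ X *ᵥ w := by
    simpa using fun w ↦ hX.dotProduct_mulVec_pos (x := w)
  change 0 < (star v ⬝ᵥ X.map ((↑) : ℝ → ℂ) *ᵥ v).re
  rw [re_star_dotProduct_map_ofReal_mulVec]
  by_cases ha : (fun k ↦ (v k).re) = 0
  · have hb : (fun k ↦ (v k).im) ≠ 0 := fun hb ↦
      hv (funext fun k ↦ Complex.ext (congrFun ha k) (congrFun hb k))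
    linarith [hre (fun k ↦ (v k).re), hpos _ hb]
  · linarith [hpos _ ha, hre (fun k ↦ (v k).im)]

variable [DecidableEq n]

lemma exists_mulVec_eq_smul_of_mem_spectrum {K : Type*} [Field K] {A : Matrix n n K} {μ : K}
    (hμ : μ ∈ spectrum K A) : ∃ v ≠ 0, A *ᵥ v = μ • v := by
  rw [← spectrum_toLin', ← Module.End.hasEigenvalue_iff_mem_spectrum] at hμ
  obtain ⟨v, hv, hv0⟩ := hμ.exists_hasEigenvector
  exact ⟨v, hv0, by simpa using Module.End.mem_eigenspace_iff.1 hv⟩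

lemma inv_diagonal_of_ne_zero {K : Type*} [Field K] {t : n → K} (ht : ∀ k, t k ≠ 0) :
    (diagonal t)⁻¹ = diagonal t⁻¹ :=
  inv_eq_left_inv <| by simp [diagonal_mul_diagonal, inv_mul_cancel₀ (ht _)]

lemma map_ofReal_mulVec_feedback_apply {t : n → ℝ} (ht : ∀ k, t k ≠ 0) (κ : n → ℝ)
    (X : Matrix n n ℝ) (v : n → ℂ) (k : n) :
    ((-(diagonal t)⁻¹ * (1 + diagonal κ * X)).map ((↑) : ℝ → ℂ) *ᵥ v) k
      = -(t k : ℂ)⁻¹ * (v k + κ k * (X.map ((↑) : ℝ → ℂ) *ᵥ v) k) := by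
  simp [mulVec, dotProduct, inv_diagonal_of_ne_zero ht, diagonal_mul, diagonal_apply, apply_ite,
    Finset.mul_sum, add_mul, Finset.sum_add_distrib, mul_add, mul_assoc]

end Matrix

variable {n : Type*} [Fintype n]

theorem re_lt_zero_of_feedback_eigenvector {t κ : n → ℝ} (ht : ∀ k, 0 < t k)
    (hκ : ∀ k, 0 ≤ κ k) {X : Matrix n n ℂ} (hX : X.PosDef) {v : n → ℂ} (hv : v ≠ 0) {μ : ℂ}
    (hμ : ∀ k, μ * t k * v k = -(v k + κ k * (X *ᵥ v) k)) : μ.re < 0 := by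
  by_contra! hμre
  have hvanish : ∀ k, κ k = 0 → v k = 0 := fun k hk ↦ by
    have hne : 1 + μ * t k ≠ 0 := fun h ↦ by
      have := congrArg Complex.re h
      simp only [Complex.add_re, Complex.one_re, Complex.mul_re, Complex.ofReal_re,
        Complex.ofReal_im, mul_zero, sub_zero, Complex.zero_re] at this
      nlinarith [ht k]
    have hk' := hμ k
    simp only [hk, Complex.ofReal_zero, zero_mul, add_zero] at hk'
    exact (mul_eq_zero.1 (by linear_combination hk')).resolve_left hne
  -- `(κ k)⁻¹ = 0` where `κ k = 0`, and there `v k = 0` as well.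
  have hweighted : ∀ k, (((κ k)⁻¹ * Complex.normSq (v k) : ℝ) : ℂ) + star (v k) * (X *ᵥ v) k
      + μ * (((κ k)⁻¹ * t k * Complex.normSq (v k) : ℝ) : ℂ) = 0 := fun k ↦ by
    rcases eq_or_ne (κ k) 0 with hk | hk
    · simp [hvanish k hk, hk]
    · have hk' : (κ k : ℂ) * (κ k : ℂ)⁻¹ = 1 := mul_inv_cancel₀ (mod_cast hk)
      push_cast [Complex.normSq_eq_conj_mul_self, ← Complex.star_def]
      linear_combination (star (v k) * (κ k : ℂ)⁻¹) * hμ k - star (v k) * (X *ᵥ v) k * hk'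
  have hsum := Finset.sum_eq_zero (s := Finset.univ) fun k _ ↦ hweighted k
  rw [Finset.sum_add_distrib, Finset.sum_add_distrib, ← Finset.mul_sum, ← Complex.ofReal_sum,
    ← Complex.ofReal_sum] at hsum
  have hre := congrArg Complex.re hsum
  rw [Complex.add_re, Complex.add_re, Complex.ofReal_re, Complex.re_mul_ofReal,
    Complex.zero_re] at hre
  have hquad : 0 < (star v ⬝ᵥ X *ᵥ v).re := hX.re_dotProduct_pos hv
  have ha : 0 ≤ ∑ k, (κ k)⁻¹ * Complex.normSq (v k) :=
    Finset.sum_nonneg fun k _ ↦ mul_nonneg (inv_nonneg.2 (hκ k)) (Complex.normSq_nonneg _)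
  have hb : 0 ≤ ∑ k, (κ k)⁻¹ * t k * Complex.normSq (v k) :=
    Finset.sum_nonneg fun k _ ↦
      mul_nonneg (mul_nonneg (inv_nonneg.2 (hκ k)) (ht k).le) (Complex.normSq_nonneg _)
  change _ + (star v ⬝ᵥ X *ᵥ v).re + _ = _ at hre
  nlinarith [mul_nonneg hμre hb]

theorem stmt_3_general {n : ℕ}
    (t κ : Fin n → ℝ) (ht : ∀ k, 0 < t k) (hκ : ∀ k, 0 ≤ κ k)
    (X : Matrix (Fin n) (Fin n) ℝ) (hXpd : X.PosDef) :
    ∀ μ ∈ spectrum ℂ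
      (((-(Matrix.diagonal t)⁻¹ *
          ((1 : Matrix (Fin n) (Fin n) ℝ) + Matrix.diagonal κ * X))).map
            Complex.ofReal),
      μ.re < 0 := by
  intro μ hμ
  obtain ⟨v, hv, hAv⟩ := exists_mulVec_eq_smul_of_mem_spectrum hμ
  refine re_lt_zero_of_feedback_eigenvector ht hκ hXpd.map_ofReal hv fun k ↦ ?_
  have hk := congrFun hAv k
  rw [map_ofReal_mulVec_feedback_apply (fun k ↦ (ht k).ne'), Pi.smul_apply, smul_eq_mul] at hk
  have htk : (t k : ℂ) * (t k : ℂ)⁻¹ = 1 := mul_inv_cancel₀ (mod_cast (ht k).ne')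
  linear_combination -(t k : ℂ) * hk - (v k + κ k * (X.map Complex.ofReal *ᵥ v) k) * htk

/-- if `X` is symmetric positive definite, `T = diag t` with
`t k > 0` and `K = diag κ` with `κ k ≥ 0`, then `A = -T⁻¹ (I + K X)` is
Hurwitz: every (complex) eigenvalue of `A` has strictly negative real part. -/
theorem stmt_3 {n : ℕ}
    (t κ : Fin n → ℝ) (ht : ∀ k, 0 < t k) (hκ : ∀ k, 0 ≤ κ k)
    (X : Matrix (Fin n) (Fin n) ℝ) (hXsymm : X.IsSymm) (hXpd : X.PosDef) :
    ∀ μ ∈ spectrum ℂ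
      (((-(Matrix.diagonal t)⁻¹ *
          ((1 : Matrix (Fin n) (Fin n) ℝ) + Matrix.diagonal κ * X))).map
            Complex.ofReal),
      μ.re < 0 :=
  stmt_3_general t κ ht hκ X hXpd
end

section
/- Rank condition for perfect decoupling: let G_a ∈ F^{p×m} and G_v ∈ F^{p×q} be matrices over a field F. There exists a matrix S ∈ F^{r×p} (for some r) such that S G_v = 0 and S G_a has rank m (i.e., S G_a is left invertible) if and only if rank [G_a G_v] = m + rank G_v. -/
/-!
Let `A` and `V` be the column spaces of `Ga` and `Gv`. Both sides say that `Ga` is injective and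
`A ⊓ V = ⊥`. For the rank condition this is the dimension formula
`dim (A ⊔ V) + dim (A ⊓ V) = dim A + dim V` together with `dim A ≤ m`. For the decoupling matrix,
`S * Gv = 0` means `V ≤ ker S`, and `S * Ga` is injective iff `Ga` is injective with
`A ⊓ ker S = ⊥`; conversely a matrix of the quotient map modulo `V` has kernel exactly `V`.
-/

open Function LinearMap Module

theorem Submodule.comap_eq_bot_iff_injective_and_disjoint {R M N : Type*} [Ring R]
    [AddCommGroup M] [Module R M] [AddCommGroup N] [Module R N]
    (f : M →ₗ[R] N) (K : Submodule R N) :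
    K.comap f = ⊥ ↔ Injective f ∧ Disjoint (range f) K := by
  rw [← ker_eq_bot, disjoint_iff, ← Submodule.map_comap_eq]
  constructor
  · intro h
    exact ⟨eq_bot_iff.2 (h ▸ Submodule.comap_mono bot_le), by rw [h, Submodule.map_bot]⟩
  · rintro ⟨hf, hK⟩
    exact Submodule.map_injective_of_injective (ker_eq_bot.1 hf) (by rwa [Submodule.map_bot])

namespace Matrix

section CommSemiring

variable {R : Type*} [CommSemiring R] {l ι n n' : Type*} [Fintype n] [Fintype n']

theorem range_mulVecLin_fromCols (A : Matrix ι n R) (B : Matrix ι n' R) :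
    range (fromCols A B).mulVecLin = range A.mulVecLin ⊔ range B.mulVecLin := by
  apply le_antisymm
  · rintro _ ⟨v, rfl⟩
    rw [mulVecLin_apply, fromCols_mulVec]
    exact Submodule.add_mem_sup ⟨_, rfl⟩ ⟨_, rfl⟩
  · refine sup_le ?_ ?_ <;> rintro _ ⟨v, rfl⟩
    · exact ⟨Sum.elim v 0, by simp⟩
    · exact ⟨Sum.elim 0 v, by simp⟩

theorem mul_eq_zero_iff_range_le_ker [Fintype ι] (S : Matrix l ι R) (B : Matrix ι n R) :
    S * B = 0 ↔ range B.mulVecLin ≤ ker S.mulVecLin := by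
  classical
  rw [range_le_ker_iff, ← mulVecLin_mul, ← toLin'_apply', ← map_zero toLin',
    toLin'.injective.eq_iff]

end CommSemiring

variable {F : Type*} [Field F] {ι n n' : Type*} [Fintype n] [Fintype n']

theorem rank_eq_card_width_iff_injective (A : Matrix ι n F) :
    A.rank = Fintype.card n ↔ Injective A.mulVecLin := by
  have := A.mulVecLin.finrank_range_add_finrank_ker
  rw [finrank_fintype_fun_eq_card] at this
  rw [← ker_eq_bot, ← Submodule.finrank_eq_zero, rank]
  omega

theorem rank_mul_eq_card_width_iff [Fintype ι] {l : Type*} (S : Matrix l ι F) (A : Matrix ι n F) :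
    (S * A).rank = Fintype.card n ↔
      Injective A.mulVecLin ∧ Disjoint (range A.mulVecLin) (ker S.mulVecLin) := by
  rw [rank_eq_card_width_iff_injective, ← ker_eq_bot, mulVecLin_mul, ker_comp,
    Submodule.comap_eq_bot_iff_injective_and_disjoint]

theorem exists_ker_mulVecLin_eq [Fintype ι] (V : Submodule F (ι → F)) :
    ∃ (r : ℕ) (S : Matrix (Fin r) ι F), ker S.mulVecLin = V := by
  classical
  let e := (finBasis F ((ι → F) ⧸ V)).equivFun
  refine ⟨_, toMatrix' (e.toLinearMap ∘ₗ V.mkQ), ?_⟩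
  rw [← toLin'_apply', toLin'_toMatrix', LinearEquiv.ker_comp, Submodule.ker_mkQ]

theorem rank_fromCols_eq_card_add_rank_iff (A : Matrix ι n F) (B : Matrix ι n' F) :
    (fromCols A B).rank = Fintype.card n + B.rank ↔
      Injective A.mulVecLin ∧ Disjoint (range A.mulVecLin) (range B.mulVecLin) := by
  have hdim := Submodule.finrank_sup_add_finrank_inf_eq (range A.mulVecLin) (range B.mulVecLin)
  have hA := A.rank_le_card_width
  rw [← rank_eq_card_width_iff_injective, disjoint_iff, ← Submodule.finrank_eq_zero, rank, rank,
    rank, range_mulVecLin_fromCols]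
  rw [rank] at hA
  omega

theorem exists_mul_eq_zero_rank_mul_eq_card_iff [Fintype ι] (A : Matrix ι n F) (B : Matrix ι n' F) :
    (∃ (r : ℕ) (S : Matrix (Fin r) ι F), S * B = 0 ∧ (S * A).rank = Fintype.card n) ↔
      Injective A.mulVecLin ∧ Disjoint (range A.mulVecLin) (range B.mulVecLin) := by
  simp_rw [mul_eq_zero_iff_range_le_ker, rank_mul_eq_card_width_iff]
  constructor
  · rintro ⟨r, S, hB, hA, hdisj⟩
    exact ⟨hA, hdisj.mono_right hB⟩
  · intro h
    obtain ⟨r, S, hS⟩ := exists_ker_mulVecLin_eq (range B.mulVecLin)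
    exact ⟨r, S, hS.ge, hS ▸ h⟩

end Matrix

/-- rank condition for perfect decoupling: over a field `F`,
there exist `r` and `S : F^{r×p}` with `S Gv = 0` and `S Ga` of full column
rank `m` (left invertible) iff `rank [Ga Gv] = m + rank Gv`. -/
theorem stmt_7 {F : Type*} [Field F] {p m q : ℕ}
    (Ga : Matrix (Fin p) (Fin m) F) (Gv : Matrix (Fin p) (Fin q) F) :
    (∃ (r : ℕ) (S : Matrix (Fin r) (Fin p) F),
      S * Gv = 0 ∧ (S * Ga).rank = m) ↔
    (Matrix.fromCols Ga Gv).rank = m + Gv.rank := by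
  simpa using (Ga.exists_mul_eq_zero_rank_mul_eq_card_iff Gv).trans
    (Ga.rank_fromCols_eq_card_add_rank_iff Gv).symm
end

section
/- Exact unknown-input tracking: with H̃ as above satisfying (I - H̃C̃)Ũ = 0, F̃ = Ã - H̃C̃Ã, and K̃ = F̃H̃, the estimation error e(t) = z(t) - ẑ(t) of the observer ζ̇ = F̃ζ + K̃C̃z, ẑ = ζ + H̃C̃z, for the plant ż = Ãz + Ũv, satisfies the autonomous dynamics ė = F̃ e, independently of the unknown input v; hence if F̃ is Hurwitz, e(t) → 0 as t → ∞ for every input signal v and every initial condition. -/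
/-!
Since `(C̃Ũ)ᵀC̃Ũ` is invertible, `H̃C̃Ũ = Ũ`, so the unknown input cancels from
`ė = ż - ζ̇ - H̃C̃ż` and `ė = F̃e`. Every solution of this linear ODE is `e t = exp (t F̃) e 0`.
Splitting the complexified `e 0` into generalized eigenvectors of `F̃`, on the one for `μ` the
exponential acts as `e^{tμ}` times a polynomial in `t`, which tends to `0` when `Re μ < 0`.
-/

open Matrix NormedSpace Filter Topology

-- Any algebra norm on matrices would do; it is only needed for the analytic API of `exp`.
attribute [local instance] Matrix.linftyOpNormedAddCommGroup Matrix.linftyOpNormedRing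
  Matrix.linftyOpNormedAlgebra

theorem Matrix.isUnit_transpose_mul_self_of_rank_eq {R : Type*} [Field R] [LinearOrder R]
    [IsStrictOrderedRing R] {m n : Type*} [Fintype m] [Fintype n] [DecidableEq n]
    {M : Matrix m n R} (hM : M.rank = Fintype.card n) : IsUnit (Mᵀ * M) := by
  rw [← mulVec_surjective_iff_isUnit, ← coe_mulVecLin, ← LinearMap.range_eq_top]
  apply Submodule.eq_top_of_finrank_eq
  rw [← rank, rank_transpose_mul_self, hM, Module.finrank_fintype_fun_eq_card]

theorem HasDerivAt.const_mulVec {𝕜 : Type*} [NontriviallyNormedField 𝕜] [CompleteSpace 𝕜]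
    {m n : Type*} [Fintype m] [Fintype n] (M : Matrix m n 𝕜) {f : 𝕜 → n → 𝕜}
    {f' : n → 𝕜} {t : 𝕜} (hf : HasDerivAt f f' t) :
    HasDerivAt (fun s => M *ᵥ f s) (M *ᵥ f') t :=
  (mulVecLin M).toContinuousLinearMap.hasFDerivAt.comp_hasDerivAt t hf

theorem hasDerivAt_observer_error {𝕜 : Type*} [NontriviallyNormedField 𝕜] [CompleteSpace 𝕜]
    {m n q : Type*} [Fintype m] [Fintype n] [Fintype q]
    {A : Matrix n n 𝕜} {U : Matrix n q 𝕜} {C : Matrix m n 𝕜} {H : Matrix n m 𝕜}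
    (hHCU : H * C * U = U) {z ζ : 𝕜 → n → 𝕜} {v : 𝕜 → q → 𝕜} {t : 𝕜}
    (hz : HasDerivAt z (A *ᵥ z t + U *ᵥ v t) t)
    (hζ : HasDerivAt ζ ((A - H * C * A) *ᵥ ζ t + ((A - H * C * A) * H) *ᵥ (C *ᵥ z t)) t) :
    HasDerivAt (fun s => z s - (ζ s + H *ᵥ (C *ᵥ z s)))
      ((A - H * C * A) *ᵥ (z t - (ζ t + H *ᵥ (C *ᵥ z t)))) t := by
  refine (hz.sub (hζ.add ((hz.const_mulVec C).const_mulVec H))).congr_deriv ?_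
  have hU : H *ᵥ (C *ᵥ (U *ᵥ v t)) = U *ᵥ v t := by rw [mulVec_mulVec, mulVec_mulVec, hHCU]
  simp only [mulVec_add, mulVec_sub, sub_mulVec, ← mulVec_mulVec, hU]
  abel

theorem Complex.tendsto_pow_mul_exp_mul_atTop_nhds_zero {μ : ℂ} (hμ : μ.re < 0) (j : ℕ) :
    Tendsto (fun t : ℝ => (t : ℂ) ^ j * Complex.exp (t * μ)) atTop (𝓝 0) := by
  have hreal := tendsto_rpow_mul_exp_neg_mul_atTop_nhds_zero j (-μ.re) (neg_pos.2 hμ)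
  refine squeeze_zero_norm' ?_ hreal
  filter_upwards [eventually_ge_atTop 0] with t ht
  simp [Complex.norm_exp, abs_of_nonneg ht, mul_comm]

theorem Matrix.exp_mulVec_eq_sum_of_pow_mulVec_eq_zero {ι 𝕂 : Type*} [Fintype ι] [DecidableEq ι]
    [RCLike 𝕂] {N : Matrix ι ι 𝕂} {x : ι → 𝕂} {k : ℕ} (hk : N ^ k *ᵥ x = 0) :
    exp N *ᵥ x = ∑ j ∈ Finset.range k, (j.factorial : 𝕂)⁻¹ • (N ^ j *ᵥ x) := by
  let L : Matrix ι ι 𝕂 →L[𝕂] (ι → 𝕂) :=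
    (LinearMap.applyₗ x ∘ₗ toLin'.toLinearMap).toContinuousLinearMap
  have hL : ∀ M, L M = M *ᵥ x := fun _ => rfl
  have hvanish : ∀ j ∉ Finset.range k, (j.factorial : 𝕂)⁻¹ • (N ^ j *ᵥ x) = 0 := by
    intro j hj
    rw [← Nat.sub_add_cancel (not_lt.1 (Finset.mem_range.not.1 hj)), pow_add, ← mulVec_mulVec,
      hk, mulVec_zero, smul_zero]
  rw [exp_eq_tsum 𝕂, ← hL, L.map_tsum (expSeries_summable' N),
    ← tsum_eq_sum (L := SummationFilter.unconditional ℕ) hvanish]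
  simp [hL, smul_mulVec]

theorem Matrix.tendsto_exp_smul_mulVec_of_pow_sub_mulVec_eq_zero {ι : Type*} [Fintype ι]
    [DecidableEq ι] {A : Matrix ι ι ℂ} {μ : ℂ} (hμ : μ.re < 0) {x : ι → ℂ} {k : ℕ}
    (hk : (A - μ • 1) ^ k *ᵥ x = 0) :
    Tendsto (fun t : ℝ => exp ((t : ℂ) • A) *ᵥ x) atTop (𝓝 0) := by
  set N := A - μ • 1
  have hexp : ∀ t : ℝ, exp ((t : ℂ) • A) *ᵥ x =
      ∑ j ∈ Finset.range k, ((t : ℂ) ^ j * Complex.exp (t * μ) * (j.factorial : ℂ)⁻¹) •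
        (N ^ j *ᵥ x) := by
    intro t
    have hsplit : (t : ℂ) • A = algebraMap ℂ _ (t * μ) + (t : ℂ) • N := by
      rw [Algebra.algebraMap_eq_smul_one, smul_sub, smul_smul, add_sub_cancel]
    have hNk : ((t : ℂ) • N) ^ k *ᵥ x = 0 := by rw [smul_pow, smul_mulVec, hk, smul_zero]
    rw [hsplit, Matrix.exp_add_of_commute _ _ (Algebra.commute_algebraMap_left _ _)]
    erw [← algebraMap_exp_comm (𝔸 := Matrix ι ι ℂ)]
    rw [← Complex.exp_eq_exp_ℂ, Algebra.algebraMap_eq_smul_one, smul_one_mul, smul_mulVec,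
      exp_mulVec_eq_sum_of_pow_mulVec_eq_zero hNk, Finset.smul_sum]
    refine Finset.sum_congr rfl fun j _ => ?_
    rw [smul_pow, smul_mulVec, smul_smul, smul_smul]
    ring_nf
  simp only [hexp]
  simpa using tendsto_finsetSum (Finset.range k) fun j _ =>
    ((Complex.tendsto_pow_mul_exp_mul_atTop_nhds_zero hμ j).mul_const
      (j.factorial : ℂ)⁻¹).smul_const (N ^ j *ᵥ x)

theorem Matrix.tendsto_exp_smul_mulVec_of_forall_re_neg {ι : Type*} [Fintype ι]
    [DecidableEq ι] {A : Matrix ι ι ℂ} (hA : ∀ μ ∈ spectrum ℂ A, μ.re < 0) (w : ι → ℂ) :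
    Tendsto (fun t : ℝ => exp ((t : ℂ) • A) *ᵥ w) atTop (𝓝 0) := by
  have hw : w ∈ ⨆ μ, Module.End.maxGenEigenspace (toLin' A) μ := by
    rw [Module.End.iSup_maxGenEigenspace_eq_top]; exact Submodule.mem_top
  induction hw using Submodule.iSup_induction' with
  | mem μ x hx =>
    obtain rfl | hx0 := eq_or_ne x 0
    · simp
    obtain ⟨k, hk⟩ := (Module.End.mem_maxGenEigenspace _ μ x).1 hx
    refine tendsto_exp_smul_mulVec_of_pow_sub_mulVec_eq_zero (k := k) (hA μ ?_) ?_
    · have hμ : Module.End.HasEigenvalue (toLin' A) μ :=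
        Module.End.HasUnifEigenvalue.lt zero_lt_one ((Submodule.ne_bot_iff _).2 ⟨x, hx, hx0⟩)
      rw [← spectrum_toLin']
      exact hμ.mem_spectrum
    · have hlin : toLinAlgEquiv' ((A - μ • 1) ^ k) = (toLin' A - μ • 1) ^ k := by
        rw [map_pow, map_sub, map_smul, map_one]; rfl
      exact (LinearMap.congr_fun hlin x).trans hk
  | zero => simp
  | add x y _ _ hx hy => simpa [add_mulVec, mulVec_add] using hx.add hy

theorem Matrix.eq_exp_smul_mulVec_of_hasDerivAt {ι : Type*} [Fintype ι] [DecidableEq ι]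
    {A : Matrix ι ι ℂ} {x : ℝ → ι → ℂ} (hx : ∀ t, HasDerivAt x (A *ᵥ x t) t) (t : ℝ) :
    x t = exp ((t : ℂ) • A) *ᵥ x 0 := by
  let L : Matrix ι ι ℂ →L[ℂ] (ι → ℂ) :=
    (LinearMap.applyₗ (x 0) ∘ₗ toLin'.toLinearMap).toContinuousLinearMap
  have hsol : ∀ s : ℝ, HasDerivAt (fun u : ℝ => exp ((u : ℂ) • A) *ᵥ x 0)
      (A *ᵥ (exp ((s : ℂ) • A) *ᵥ x 0)) s := by
    intro s
    simp only [mulVec_mulVec, Complex.coe_smul]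
    exact (L.restrictScalars ℝ).hasFDerivAt.comp_hasDerivAt s (hasDerivAt_exp_smul_const' A s)
  have hlip := (mulVecLin A).toContinuousLinearMap.lipschitz
  refine congrFun (ODE_solution_unique_univ (v := fun _ y => A *ᵥ y) (s := fun _ => Set.univ)
    (t₀ := 0) (fun _ => hlip.lipschitzOnWith) (fun s => ⟨hx s, trivial⟩)
    (fun s => ⟨hsol s, trivial⟩) (by simp)) t

theorem Matrix.tendsto_atTop_nhds_zero_of_hasDerivAt_mulVec {ι : Type*} [Fintype ι]
    [DecidableEq ι] {F : Matrix ι ι ℝ} (hF : ∀ μ ∈ spectrum ℂ (F.map Complex.ofReal), μ.re < 0)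
    {x : ℝ → ι → ℝ} (hx : ∀ t, HasDerivAt x (F *ᵥ x t) t) :
    Tendsto x atTop (𝓝 0) := by
  set xC : ℝ → ι → ℂ := fun t i => x t i
  have hxC : ∀ t, HasDerivAt xC (F.map Complex.ofReal *ᵥ xC t) t := fun t =>
    hasDerivAt_pi.2 fun i => by
      rw [show (F.map Complex.ofReal *ᵥ xC t) i = ((F *ᵥ x t) i : ℂ) from
        (RingHom.map_mulVec Complex.ofRealHom F (x t) i).symm]
      exact (hasDerivAt_pi.1 (hx t) i).ofReal_comp
  have hdecay : Tendsto xC atTop (𝓝 0) := by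
    simpa only [← eq_exp_smul_mulVec_of_hasDerivAt hxC] using
      tendsto_exp_smul_mulVec_of_forall_re_neg hF (xC 0)
  exact tendsto_pi_nhds.2 fun i =>
    (Complex.continuous_re.tendsto 0).comp (tendsto_pi_nhds.1 hdecay i)

theorem stmt_14_general {n q p : ℕ}
    (At : Matrix (Fin n) (Fin n) ℝ) (Ut : Matrix (Fin n) (Fin q) ℝ)
    (Ct : Matrix (Fin p) (Fin n) ℝ)
    (hrank : (Ct * Ut).rank = q)
    (Ht : Matrix (Fin n) (Fin p) ℝ)
    (hHt : Ht = Ut * ((Ct * Ut)ᵀ * (Ct * Ut))⁻¹ * (Ct * Ut)ᵀ)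
    (Ft : Matrix (Fin n) (Fin n) ℝ) (hFt : Ft = At - Ht * Ct * At)
    (Kt : Matrix (Fin n) (Fin p) ℝ) (hKt : Kt = Ft * Ht)
    (v : ℝ → Fin q → ℝ)
    (z ζ : ℝ → Fin n → ℝ)
    (hz : ∀ t, HasDerivAt z (At.mulVec (z t) + Ut.mulVec (v t)) t)
    (hζ : ∀ t, HasDerivAt ζ (Ft.mulVec (ζ t) + Kt.mulVec (Ct.mulVec (z t))) t)
    (zhat e : ℝ → Fin n → ℝ)
    (hzhat : ∀ t, zhat t = ζ t + Ht.mulVec (Ct.mulVec (z t)))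
    (he : ∀ t, e t = z t - zhat t) :
    (∀ t, HasDerivAt e (Ft.mulVec (e t)) t) ∧
    ((∀ μ ∈ spectrum ℂ (Ft.map Complex.ofReal), μ.re < 0) →
      Filter.Tendsto e Filter.atTop (nhds 0)) := by
  have hunit : IsUnit ((Ct * Ut)ᵀ * (Ct * Ut)).det :=
    (isUnit_iff_isUnit_det _).1 <|
      isUnit_transpose_mul_self_of_rank_eq (hrank.trans (Fintype.card_fin q).symm)
  have hHCU : Ht * Ct * Ut = Ut := by
    simp only [hHt, Matrix.mul_assoc]
    rw [nonsing_inv_mul _ hunit, Matrix.mul_one]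
  have herr : e = fun s => z s - (ζ s + Ht *ᵥ (Ct *ᵥ z s)) := funext fun s => by rw [he, hzhat]
  have hder : ∀ t, HasDerivAt e (Ft *ᵥ e t) t := by
    subst hKt hFt herr
    exact fun t => hasDerivAt_observer_error hHCU (hz t) (hζ t)
  exact ⟨hder, fun hF => tendsto_atTop_nhds_zero_of_hasDerivAt_mulVec hF hder⟩

/-- exact unknown-input tracking: with
`H̃ = Ũ((C̃Ũ)ᵀC̃Ũ)⁻¹(C̃Ũ)ᵀ` (so `(I - H̃C̃)Ũ = 0`), `F̃ = Ã - H̃C̃Ã`,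
`K̃ = F̃H̃`, the estimation error `e = z - ẑ` of the observer
`ζ̇ = F̃ζ + K̃C̃z`, `ẑ = ζ + H̃C̃z` for the plant `ż = Ãz + Ũv` obeys
`ė = F̃e` independently of the unknown input `v`; if moreover `F̃` is Hurwitz
then `e(t) → 0` as `t → ∞`. -/
theorem stmt_14 {n q p : ℕ}
    (At : Matrix (Fin n) (Fin n) ℝ) (Ut : Matrix (Fin n) (Fin q) ℝ)
    (Ct : Matrix (Fin p) (Fin n) ℝ)
    (hrank : (Ct * Ut).rank = q)
    (Ht : Matrix (Fin n) (Fin p) ℝ)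
    (hHt : Ht = Ut * ((Ct * Ut)ᵀ * (Ct * Ut))⁻¹ * (Ct * Ut)ᵀ)
    (Ft : Matrix (Fin n) (Fin n) ℝ) (hFt : Ft = At - Ht * Ct * At)
    (Kt : Matrix (Fin n) (Fin p) ℝ) (hKt : Kt = Ft * Ht)
    (v : ℝ → Fin q → ℝ) (hv : Continuous v)
    (z ζ : ℝ → Fin n → ℝ)
    (hz : ∀ t, HasDerivAt z (At.mulVec (z t) + Ut.mulVec (v t)) t)
    (hζ : ∀ t, HasDerivAt ζ (Ft.mulVec (ζ t) + Kt.mulVec (Ct.mulVec (z t))) t)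
    (zhat e : ℝ → Fin n → ℝ)
    (hzhat : ∀ t, zhat t = ζ t + Ht.mulVec (Ct.mulVec (z t)))
    (he : ∀ t, e t = z t - zhat t) :
    (∀ t, HasDerivAt e (Ft.mulVec (e t)) t) ∧
    ((∀ μ ∈ spectrum ℂ (Ft.map Complex.ofReal), μ.re < 0) →
      Filter.Tendsto e Filter.atTop (nhds 0)) :=
  stmt_14_general At Ut Ct hrank Ht hHt Ft hFt Kt hKt v z ζ hz hζ zhat e hzhat he
end
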